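/- Let Y₁, Y₂ be independent standard normals and p, q ∈ (0,1) with p + q < 1. Then P(Y₁ ≤ −Φ⁻¹(p), Y₂ ≤ −Φ⁻¹(q), Y₁ + Y₂ ≤ 0) = (1 − p² − q²)/2. -/

import Mathlib

/-! Put `a = -Φ⁻¹(p)` and `b = -Φ⁻¹(q)`. By the symmetry of the Gaussian law `μ`, `μ (a, ∞) = p`
and `μ (b, ∞) = q`, and `p + q < 1` forces `a + b ≥ 0`. The half-plane `{x + y ≤ 0}`, of
probability `1/2`, is then the disjoint union of the event in question and of
`{x > a, x + y ≤ 0}`, `{y > b, x + y ≤ 0}`. Reflecting `y ↦ -y` turns `{x > a, x + y ≤ 0}` into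
`{a < x ≤ y}`; this set and its mirror image `{a < y ≤ x}` cover `(a, ∞)²` and overlap only on
the diagonal, which is null, so it has probability `p² / 2`, and likewise the third one has
probability `q² / 2`. -/

open MeasureTheory ProbabilityTheory Real Set Filter
open scoped ENNReal

/-- Standard normal CDF. -/
noncomputable def Phi (x : ℝ) : ℝ := ((gaussianReal 0 1) (Set.Iic x)).toReal

/-- Inverse of the standard normal CDF. -/
noncomputable def PhiInv : ℝ → ℝ := Function.invFun Phi

section LinearOrder

variable {α : Type*} [MeasurableSpace α] [LinearOrder α] [TopologicalSpace α]
  [OrderClosedTopology α] [SecondCountableTopology α] [OpensMeasurableSpace α]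
  (μ : Measure α) [SFinite μ] [NullSingletonClass μ]

theorem two_mul_prod_self_setOf_le_of_isUpperSet {s : Set α} (hs : MeasurableSet s)
    (hs' : IsUpperSet s) : 2 * μ.prod μ {z | z.1 ∈ s ∧ z.1 ≤ z.2} = μ s ^ 2 := by
  set T := {z : α × α | z.1 ∈ s ∧ z.1 ≤ z.2}
  have hT : MeasurableSet T :=
    (hs.preimage measurable_fst).inter (measurableSet_le measurable_fst measurable_snd)
  have hswap : μ.prod μ (Prod.swap ⁻¹' T) = μ.prod μ T :=
    Measure.measurePreserving_swap.measure_preimage hT.nullMeasurableSet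
  have hunion : T ∪ Prod.swap ⁻¹' T = s ×ˢ s := by
    ext ⟨x, y⟩
    simp only [T, mem_union, mem_preimage, mem_ofPred_eq, Prod.fst_swap, Prod.snd_swap, mem_prod]
    constructor
    · rintro (⟨hx, hxy⟩ | ⟨hy, hyx⟩)
      exacts [⟨hx, hs' hxy hx⟩, ⟨hs' hyx hy, hy⟩]
    · rintro ⟨hx, hy⟩
      exact (le_total x y).imp (⟨hx, ·⟩) (⟨hy, ·⟩)
  have hinter : μ.prod μ (T ∩ Prod.swap ⁻¹' T) = 0 := by
    refine Measure.measure_prod_null_of_ae_null (hT.inter (measurable_swap hT))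
      (ae_of_all _ fun x => measure_mono_null ?_ (measure_singleton x))
    rintro y ⟨⟨-, hxy⟩, -, hyx⟩
    exact le_antisymm hyx hxy
  calc 2 * μ.prod μ T = μ.prod μ T + μ.prod μ (Prod.swap ⁻¹' T) := by rw [hswap, two_mul]
    _ = μ.prod μ (T ∪ Prod.swap ⁻¹' T) + μ.prod μ (T ∩ Prod.swap ⁻¹' T) :=
      (measure_union_add_inter _ (measurable_swap hT)).symm
    _ = μ s ^ 2 := by rw [hunion, hinter, add_zero, Measure.prod_prod, sq]

end LinearOrder

theorem measure_setOf_add_nonpos_eq (ν : Measure (ℝ × ℝ)) {a b : ℝ} (hab : 0 ≤ a + b) :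
    ν {z | z.1 + z.2 ≤ 0} = ν {z | z.1 ≤ a ∧ z.2 ≤ b ∧ z.1 + z.2 ≤ 0}
      + ν {z | a < z.1 ∧ z.1 + z.2 ≤ 0} + ν {z | b < z.2 ∧ z.1 + z.2 ≤ 0} := by
  have hsum : MeasurableSet {z : ℝ × ℝ | z.1 + z.2 ≤ 0} :=
    measurableSet_le (measurable_fst.add measurable_snd) measurable_const
  have hd₁ : Disjoint {z : ℝ × ℝ | z.1 ≤ a ∧ z.2 ≤ b ∧ z.1 + z.2 ≤ 0}
      {z | a < z.1 ∧ z.1 + z.2 ≤ 0} :=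
    disjoint_left.2 fun z hz hz' => hz'.1.not_ge hz.1
  -- `a < z.1` and `b < z.2` would force `0 < z.1 + z.2`
  have hd₂ : Disjoint ({z : ℝ × ℝ | z.1 ≤ a ∧ z.2 ≤ b ∧ z.1 + z.2 ≤ 0}
      ∪ {z | a < z.1 ∧ z.1 + z.2 ≤ 0}) {z | b < z.2 ∧ z.1 + z.2 ≤ 0} := by
    refine disjoint_left.2 fun z hz hz' => ?_
    simp only [mem_union, mem_ofPred_eq] at hz hz'
    grind
  rw [← measure_union hd₁ ((measurableSet_lt measurable_const measurable_fst).inter hsum),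
    ← measure_union hd₂ ((measurableSet_lt measurable_const measurable_snd).inter hsum)]
  congr 1
  ext z
  simp only [mem_union, mem_ofPred_eq]
  grind

theorem continuous_cdf (μ : Measure ℝ) [IsProbabilityMeasure μ] [NullSingletonClass μ] :
    Continuous (cdf μ) := by
  refine continuous_iff_continuousAt.2 fun x =>
    (cdf μ).mono.continuousAt_iff_leftLim_eq_rightLim.2 ?_
  have hjump := (cdf μ).measure_singleton x
  rw [measure_cdf, measure_singleton, eq_comm, ENNReal.ofReal_eq_zero, sub_nonpos] at hjump
  rw [(cdf μ).rightLim_eq]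
  exact le_antisymm ((cdf μ).mono.leftLim_le le_rfl) hjump

theorem mem_range_cdf (μ : Measure ℝ) [IsProbabilityMeasure μ] [NullSingletonClass μ] {p : ℝ}
    (hp : p ∈ Ioo 0 1) : p ∈ range (cdf μ) :=
  mem_range_of_exists_le_of_exists_ge (continuous_cdf μ)
    (((tendsto_order.1 (tendsto_cdf_atBot μ)).2 p hp.1).exists.imp fun _ => le_of_lt)
    (((tendsto_order.1 (tendsto_cdf_atTop μ)).1 p hp.2).exists.imp fun _ => le_of_lt)

section Symmetric

variable {μ : Measure ℝ}

theorem two_mul_prod_self_setOf_add_nonpos [SFinite μ] [NullSingletonClass μ]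
    (hμ : μ.map (fun x => -x) = μ) {s : Set ℝ} (hs : MeasurableSet s) (hs' : IsUpperSet s) :
    2 * μ.prod μ {z | z.1 ∈ s ∧ z.1 + z.2 ≤ 0} = μ s ^ 2 := by
  have hneg : MeasurePreserving (Prod.map id fun x => -x) (μ.prod μ) (μ.prod μ) :=
    (MeasurePreserving.id μ).prod ⟨measurable_neg, hμ⟩
  have hset : {z : ℝ × ℝ | z.1 ∈ s ∧ z.1 + z.2 ≤ 0}
      = Prod.map id (fun x => -x) ⁻¹' {z | z.1 ∈ s ∧ z.1 ≤ z.2} := by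
    ext z
    simp only [mem_preimage, mem_ofPred_eq, Prod.map_fst, id_eq, Prod.map_snd,
      le_neg_iff_add_nonpos_right]
  have hT : MeasurableSet {z : ℝ × ℝ | z.1 ∈ s ∧ z.1 ≤ z.2} :=
    (hs.preimage measurable_fst).inter (measurableSet_le measurable_fst measurable_snd)
  rw [hset, hneg.measure_preimage hT.nullMeasurableSet]
  exact two_mul_prod_self_setOf_le_of_isUpperSet μ hs hs'

theorem measureReal_Ioi_neg [IsProbabilityMeasure μ] [NullSingletonClass μ]
    (hμ : μ.map (fun x => -x) = μ) (x : ℝ) : μ.real (Ioi (-x)) = cdf μ x := by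
  have hneg : MeasurePreserving (fun x : ℝ => -x) μ μ := ⟨measurable_neg, hμ⟩
  rw [cdf_eq_real, ← measureReal_congr Iio_ae_eq_Iic, measureReal_def, measureReal_def,
    ← hneg.measure_preimage measurableSet_Ioi.nullMeasurableSet]
  congr 2
  ext y
  simp

theorem cdf_neg [IsProbabilityMeasure μ] [NullSingletonClass μ] (hμ : μ.map (fun x => -x) = μ)
    (x : ℝ) : cdf μ (-x) = 1 - cdf μ x := by
  rw [cdf_eq_real, ← compl_Ioi, probReal_compl_eq_one_sub measurableSet_Ioi,
    measureReal_Ioi_neg hμ]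

theorem measureReal_prod_self_setOf_le_le_add_nonpos [IsProbabilityMeasure μ]
    [NullSingletonClass μ] (hμ : μ.map (fun x => -x) = μ) {a b : ℝ} (hab : 0 ≤ a + b) :
    (μ.prod μ).real {z | z.1 ≤ a ∧ z.2 ≤ b ∧ z.1 + z.2 ≤ 0}
      = (1 - μ.real (Ioi a) ^ 2 - μ.real (Ioi b) ^ 2) / 2 := by
  have hC : 2 * μ.prod μ {z | z.1 + z.2 ≤ 0} = 1 := by
    simpa using two_mul_prod_self_setOf_add_nonpos hμ MeasurableSet.univ isUpperSet_univ
  have hB₁ : 2 * μ.prod μ {z | a < z.1 ∧ z.1 + z.2 ≤ 0} = μ (Ioi a) ^ 2 :=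
    two_mul_prod_self_setOf_add_nonpos hμ measurableSet_Ioi (isUpperSet_Ioi _)
  have hB₂ : 2 * μ.prod μ {z | b < z.2 ∧ z.1 + z.2 ≤ 0} = μ (Ioi b) ^ 2 := by
    have hswap : {z : ℝ × ℝ | b < z.2 ∧ z.1 + z.2 ≤ 0}
        = Prod.swap ⁻¹' {z | z.1 ∈ Ioi b ∧ z.1 + z.2 ≤ 0} := by
      ext z
      simp [add_comm]
    have hmeas : MeasurableSet {z : ℝ × ℝ | z.1 ∈ Ioi b ∧ z.1 + z.2 ≤ 0} :=
      (measurableSet_Ioi.preimage measurable_fst).inter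
        (measurableSet_le (measurable_fst.add measurable_snd) measurable_const)
    rw [hswap, Measure.measurePreserving_swap.measure_preimage hmeas.nullMeasurableSet]
    exact two_mul_prod_self_setOf_add_nonpos hμ measurableSet_Ioi (isUpperSet_Ioi _)
  have hsplit : (1 : ℝ≥0∞) = 2 * μ.prod μ {z | z.1 ≤ a ∧ z.2 ≤ b ∧ z.1 + z.2 ≤ 0}
      + μ (Ioi a) ^ 2 + μ (Ioi b) ^ 2 := by
    rw [← hC, ← hB₁, ← hB₂, measure_setOf_add_nonpos_eq _ hab, mul_add, mul_add]
  have hsplit' := congrArg ENNReal.toReal hsplit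
  rw [ENNReal.toReal_add (by finiteness) (by finiteness),
    ENNReal.toReal_add (by finiteness) (by finiteness), ENNReal.toReal_mul, ENNReal.toReal_pow,
    ENNReal.toReal_pow, ENNReal.toReal_one, ENNReal.toReal_ofNat] at hsplit'
  simp only [measureReal_def]
  linarith

theorem measureReal_prod_self_setOf_le_neg_le_neg_add_nonpos [IsProbabilityMeasure μ]
    [NullSingletonClass μ] (hμ : μ.map (fun x => -x) = μ) {x y : ℝ}
    (hxy : cdf μ x + cdf μ y < 1) :
    (μ.prod μ).real {z | z.1 ≤ -x ∧ z.2 ≤ -y ∧ z.1 + z.2 ≤ 0}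
      = (1 - cdf μ x ^ 2 - cdf μ y ^ 2) / 2 := by
  have hxy' : 0 ≤ -x + -y := by
    by_contra! h
    have hmono := monotone_cdf μ (show -x ≤ y by linarith)
    rw [cdf_neg hμ] at hmono
    linarith
  rw [measureReal_prod_self_setOf_le_le_add_nonpos hμ hxy', measureReal_Ioi_neg hμ,
    measureReal_Ioi_neg hμ]

end Symmetric

theorem Phi_eq_cdf : Phi = cdf (gaussianReal 0 1) :=
  funext fun x => (cdf_eq_real (gaussianReal 0 1) x).symm

theorem cdf_gaussianReal_PhiInv {p : ℝ} (hp : p ∈ Ioo 0 1) :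
    cdf (gaussianReal 0 1) (PhiInv p) = p := by
  have := nullSingletonClass_gaussianReal (μ := 0) one_ne_zero
  rw [← Phi_eq_cdf]
  exact Function.invFun_eq (Phi_eq_cdf ▸ mem_range_cdf _ hp)

/-- For independent standard normals and p+q < 1,
P(Y₁ ≤ -Φ⁻¹(p), Y₂ ≤ -Φ⁻¹(q), Y₁+Y₂ ≤ 0) = (1-p²-q²)/2. -/
theorem stmt3 {A : Type*} [MeasurableSpace A] (P : Measure A) [IsProbabilityMeasure P]
    (Y₁ Y₂ : A → ℝ) (h₁ : Measurable Y₁) (h₂ : Measurable Y₂)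
    (hl₁ : P.map Y₁ = gaussianReal 0 1) (hl₂ : P.map Y₂ = gaussianReal 0 1)
    (hind : IndepFun Y₁ Y₂ P) (p q : ℝ)
    (hp : p ∈ Set.Ioo (0:ℝ) 1) (hq : q ∈ Set.Ioo (0:ℝ) 1) (hpq : p + q < 1) :
    (P {ω | Y₁ ω ≤ -PhiInv p ∧ Y₂ ω ≤ -PhiInv q ∧ Y₁ ω + Y₂ ω ≤ 0}).toReal
      = (1 - p^2 - q^2) / 2 := by
  have := nullSingletonClass_gaussianReal (μ := 0) one_ne_zero
  have hsymm : (gaussianReal 0 1).map (fun x => -x) = gaussianReal 0 1 := by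
    simpa using gaussianReal_map_neg (μ := 0) (v := 1)
  have hlaw : P.map (fun ω => (Y₁ ω, Y₂ ω)) = (gaussianReal 0 1).prod (gaussianReal 0 1) := by
    rw [(indepFun_iff_map_prod_eq_prod_map_map h₁.aemeasurable h₂.aemeasurable).1 hind, hl₁,
      hl₂]
  have hS : MeasurableSet {z : ℝ × ℝ | z.1 ≤ -PhiInv p ∧ z.2 ≤ -PhiInv q ∧ z.1 + z.2 ≤ 0} :=
    (measurableSet_le measurable_fst measurable_const).inter
      ((measurableSet_le measurable_snd measurable_const).inter
        (measurableSet_le (measurable_fst.add measurable_snd) measurable_const))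
  have hp_cdf := cdf_gaussianReal_PhiInv hp
  have hq_cdf := cdf_gaussianReal_PhiInv hq
  calc (P {ω | Y₁ ω ≤ -PhiInv p ∧ Y₂ ω ≤ -PhiInv q ∧ Y₁ ω + Y₂ ω ≤ 0}).toReal
      = ((gaussianReal 0 1).prod (gaussianReal 0 1)).real
          {z | z.1 ≤ -PhiInv p ∧ z.2 ≤ -PhiInv q ∧ z.1 + z.2 ≤ 0} := by
        rw [← hlaw, map_measureReal_apply (h₁.prodMk h₂) hS]
        rfl
    _ = (1 - p ^ 2 - q ^ 2) / 2 := by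
        rw [measureReal_prod_self_setOf_le_neg_le_neg_add_nonpos hsymm (by rwa [hp_cdf, hq_cdf]),
          hp_cdf, hq_cdf]
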